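/- There are exactly four Lawvere–Tierney topologies on the topos of graphs: the identity, the constant-true topology ⊤∘!, the double negation topology ¬¬, and the closed topology for the global element st (defined on arcs by j(0_A)=st, j(s)=j(t)=st, j(st)=st, j(A)=A, and sending both nodes to 'in'). -/

import Mathlib

/-- A directed graph: nodes, arcs, source and target maps. -/
structure DirGraph where
  N : Type
  A : Type
  src : A → N
  tgt : A → N

/-- A graph morphism. -/
@[ext]
structure Hom (G H : DirGraph) where
  fN : G.N → H.N
  fA : G.A → H.A
  hsrc : ∀ a, H.src (fA a) = fN (G.src a)
  htgt : ∀ a, H.tgt (fA a) = fN (G.tgt a)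

/-- Composition of graph morphisms. -/
def Hom.comp {G H K : DirGraph} (g : Hom H K) (f : Hom G H) : Hom G K where
  fN := g.fN ∘ f.fN
  fA := g.fA ∘ f.fA
  hsrc a := by simp [g.hsrc, f.hsrc]
  htgt a := by simp [g.htgt, f.htgt]

/-- The arcs of the subobject classifier of graphs. -/
inductive OmegaA | zero | s | t | st | top
deriving DecidableEq

/-- The subobject classifier graph `Ω`: nodes are `Bool` (`true` = "in",
`false` = "out"); arcs `0_A : out→out`, `s : in→out`, `t : out→in`,
`st : in→in`, `A : in→in`. -/
def Omega : DirGraph where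
  N := Bool
  A := OmegaA
  src a := match a with
    | .zero => false | .s => true | .t => false | .st => true | .top => true
  tgt a := match a with
    | .zero => false | .s => false | .t => true | .st => true | .top => true

/-- A subgraph of `G`, given by a set of nodes and a set of arcs whose
endpoints belong to the node set. -/
def IsSubgraph (G : DirGraph) (SN : Set G.N) (SA : Set G.A) : Prop :=
  ∀ a ∈ SA, G.src a ∈ SN ∧ G.tgt a ∈ SN

/-- `χ : G → Ω` classifies the subgraph `(SN, SA)`: the subgraph is the pullback
of `⊤ : 1 → Ω` (picking the node `true` and the arc `top`) along `χ`. -/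
def Classifies {G : DirGraph} (χ : Hom G Omega) (SN : Set G.N) (SA : Set G.A) : Prop :=
  (∀ n, n ∈ SN ↔ χ.fN n = true) ∧ (∀ a, a ∈ SA ↔ χ.fA a = OmegaA.top)

/-- The order on the arcs of `Ω`: `0_A < s, t < st < A` with `s, t` incomparable. -/
def leA : OmegaA → OmegaA → Prop := fun x y =>
  x = y ∨ x = OmegaA.zero ∨ y = OmegaA.top ∨ (x ≠ OmegaA.top ∧ y = OmegaA.st)

/-- The meet on the arcs of `Ω` with respect to the order
`0_A < s, t < st < A` (`s`, `t` incomparable). -/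
def meetA : OmegaA → OmegaA → OmegaA
  | .top, x => x
  | x, .top => x
  | .zero, _ => .zero
  | _, .zero => .zero
  | .st, x => x
  | x, .st => x
  | .s, .s => .s
  | .t, .t => .t
  | .s, .t => .zero
  | .t, .s => .zero

/-- A Lawvere–Tierney topology on the topos of graphs, described concretely as a
graph endomorphism of `Ω` preserving truth and conjunction and idempotent. -/
def IsTopology (j : Hom Omega Omega) : Prop :=
  (j.fN true = true ∧ j.fA OmegaA.top = OmegaA.top) ∧
  (∀ n, j.fN (j.fN n) = j.fN n) ∧ (∀ a, j.fA (j.fA a) = j.fA a) ∧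
  (∀ n m, j.fN (n && m) = (j.fN n && j.fN m)) ∧
  (∀ a b, j.fA (meetA a b) = meetA (j.fA a) (j.fA b))

/-- The identity topology. -/
def idTop : Hom Omega Omega := ⟨id, id, fun _ => rfl, fun _ => rfl⟩

/-- The constant-true topology `⊤ ∘ !`. -/
def trueTop : Hom Omega Omega where
  fN _ := true
  fA _ := OmegaA.top
  hsrc a := by cases a <;> rfl
  htgt a := by cases a <;> rfl

/-- The double negation topology. -/
def negnegTop : Hom Omega Omega where
  fN n := n
  fA a := match a with
    | .st => .top | .top => .top | .zero => .zero | .s => .s | .t => .t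
  hsrc a := by cases a <;> rfl
  htgt a := by cases a <;> rfl

/-- The closed topology for the global element `st`. -/
def closedTop : Hom Omega Omega where
  fN _ := true
  fA a := match a with
    | .top => .top | _ => .st
  hsrc a := by cases a <;> rfl
  htgt a := by cases a <;> rfl

/-!
A topology fixes the node `in`, so everything depends on where it sends the node `out`.
If `out ↦ out`, every arc with an endpoint `out` keeps its endpoints and is therefore fixed,
leaving only `j st ∈ {st, A}`: this gives the identity and `¬¬`. If `out ↦ in`, every arc lands
on a loop at `in`, i.e. on `st` or `A`. Then `j st = A` forces `j = ⊤ ∘ !` by idempotence, while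
`j st = st` pushes every other arc below `st` by monotonicity, which gives the closed topology.
-/

lemma Hom.ext_of_fA {G H : DirGraph} (hG : Function.Surjective G.src) {f g : Hom G H}
    (h : f.fA = g.fA) : f = g := by
  refine Hom.ext (funext fun n => ?_) h
  obtain ⟨a, rfl⟩ := hG n
  rw [← f.hsrc, ← g.hsrc, h]

namespace Omega

lemma src_surjective : Function.Surjective Omega.src
  | false => ⟨.zero, rfl⟩
  | true => ⟨.top, rfl⟩

lemma hom_ext {j k : Hom Omega Omega} (h : ∀ a, j.fA a = k.fA a) : j = k :=
  Hom.ext_of_fA src_surjective (funext h)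

lemma eq_of_src_eq_of_tgt_eq {a b : Omega.A} (hs : Omega.src a = Omega.src b)
    (ht : Omega.tgt a = Omega.tgt b) (hb : Omega.src b = false ∨ Omega.tgt b = false) :
    a = b := by
  cases a <;> cases b <;> simp_all [Omega]

lemma eq_st_or_top_of_src_of_tgt {a : Omega.A} (hs : Omega.src a = true)
    (ht : Omega.tgt a = true) : a = .st ∨ a = .top := by
  cases a <;> simp_all [Omega]

end Omega

lemma meetA_st_of_ne_top {a : OmegaA} (ha : a ≠ .top) : meetA a .st = a := by
  cases a <;> first | rfl | contradiction

lemma eq_idTop_or_negnegTop {j : Hom Omega Omega} (hfalse : j.fN false = false)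
    (htrue : j.fN true = true) (htop : j.fA .top = .top) : j = idTop ∨ j = negnegTop := by
  have hN : ∀ n, j.fN n = n := by rintro (_ | _) <;> assumption
  have hfix : ∀ a : Omega.A, Omega.src a = false ∨ Omega.tgt a = false → j.fA a = a :=
    fun a => Omega.eq_of_src_eq_of_tgt_eq ((j.hsrc a).trans (hN _)) ((j.htgt a).trans (hN _))
  rcases Omega.eq_st_or_top_of_src_of_tgt ((j.hsrc .st).trans htrue)
    ((j.htgt .st).trans htrue) with hst | hst <;> [left; right] <;>
  · refine Omega.hom_ext fun a => ?_
    cases a <;> first | exact htop | exact hst | exact hfix _ (.inl rfl) | exact hfix _ (.inr rfl)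

lemma IsTopology.eq_trueTop_or_closedTop {j : Hom Omega Omega} (hj : IsTopology j)
    (hfalse : j.fN false = true) : j = trueTop ∨ j = closedTop := by
  obtain ⟨⟨htrue, htop⟩, -, hidem, -, hmeet⟩ := hj
  have hN : ∀ n, j.fN n = true := by rintro (_ | _) <;> assumption
  have hloop : ∀ a : OmegaA, j.fA a = .st ∨ j.fA a = .top := fun a =>
    Omega.eq_st_or_top_of_src_of_tgt ((j.hsrc a).trans (hN _)) ((j.htgt a).trans (hN _))
  rcases hloop .st with hst | hst
  · right
    have hbelow : ∀ a : OmegaA, a ≠ .top → j.fA a = .st := fun a ha => by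
      have hmono := hmeet a .st
      rw [meetA_st_of_ne_top ha, hst] at hmono
      refine (hloop a).resolve_right fun h => ?_
      rw [h] at hmono
      cases hmono
    refine Omega.hom_ext fun a => ?_
    cases a <;> first | exact htop | exact hbelow _ (by decide)
  · left
    refine Omega.hom_ext fun a => (hloop a).resolve_left fun h => ?_
    have := hidem a
    rw [h, hst] at this
    cases this

/-- there are exactly four Lawvere–Tierney topologies on the topos
of graphs: the identity, the constant-true topology, double negation, and the
closed topology for `st`. -/
theorem topologies_classification (j : Hom Omega Omega) :
    IsTopology j ↔ j = idTop ∨ j = trueTop ∨ j = negnegTop ∨ j = closedTop := by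
  refine ⟨fun hj => ?_, ?_⟩
  · cases hfalse : j.fN false
    · rcases eq_idTop_or_negnegTop hfalse hj.1.1 hj.1.2 with h | h <;> tauto
    · rcases hj.eq_trueTop_or_closedTop hfalse with h | h <;> tauto
  · rintro (rfl | rfl | rfl | rfl) <;>
      exact ⟨⟨rfl, rfl⟩, by intro n; cases n <;> rfl, by intro a; cases a <;> rfl,
        by intro n m; cases n <;> cases m <;> rfl, by intro a b; cases a <;> cases b <;> rfl⟩
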